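/- Let B_w be a weighted backward shift on ℓ^p (1 ≤ p < ∞) with coordinatewise multiplication, where the weight sequence satisfies |w(n)| ≥ 1 for all n ≥ 2. Suppose there exists an integer m ≥ 2 such that Σ_{n≥2} 1/|w(2)w(3)⋯w(n)|^{p/m} = ∞. Then for every x ∈ ℓ^p, the coordinatewise power x^m is not frequently hypercyclic for B_w. In particular, B_w has no frequently hypercyclic algebra. -/

import Mathlib

open Filter
open scoped ENNReal

/-- Lower density of a set of natural numbers. -/
noncomputable def lowerDensity (A : Set ℕ) : ℝ :=
  Filter.atTop.liminf fun N : ℕ => ((A ∩ Set.Iic N).ncard : ℝ) / (N + 1)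

/-- A vector is frequently hypercyclic if it visits every nonempty open set along a set
of positive lower density. -/
def FreqHypercyclic {X : Type*} [TopologicalSpace X] (T : X → X) (x : X) : Prop :=
  ∀ U : Set X, IsOpen U → U.Nonempty → 0 < lowerDensity {n : ℕ | T^[n] x ∈ U}

/-!
Because `‖w k‖ ≥ 1`, the coordinate `0` of `B_w^n y` has modulus at most `|w(2)⋯w(n+2)| |y(n)|`.
Hence every `n` with `B_w^n (x^m)` in the open set `{z | ‖z 0‖ > 1/2}` satisfies
`|x(n)|^p ≥ 2^{-p/m} |w(2)⋯w(n+2)|^{-p/m}`. If `x^m` were frequently hypercyclic, this would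
hold along a set of positive lower density; as the right-hand side decreases in `n`, the
summability of `|x(n)|^p` along such a set forces the divergent series to converge.
Finally, a nonzero vector of an algebra has its `m`-th power in the algebra.
-/

lemma ncard_inter_Iic_eq_count (A : Set ℕ) [DecidablePred (· ∈ A)] (N : ℕ) :
    (A ∩ Set.Iic N).ncard = Nat.count (· ∈ A) (N + 1) := by
  rw [Nat.count_eq_card_filter_range, ← Set.ncard_coe_finset]
  congr 1
  ext n
  simp [and_comm]

section LowerDensity

variable {A : Set ℕ}

lemma eventually_mul_lt_count_of_lt_lowerDensity [DecidablePred (· ∈ A)] {δ : ℝ}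
    (hδ : δ < lowerDensity A) :
    ∀ᶠ N : ℕ in atTop, δ * N < Nat.count (· ∈ A) N := by
  have h : ∀ᶠ N : ℕ in atTop, δ < ((A ∩ Set.Iic N).ncard : ℝ) / (N + 1) :=
    eventually_lt_of_lt_liminf hδ (isBoundedUnder_of ⟨0, fun N => by positivity⟩)
  filter_upwards [(tendsto_sub_atTop_nat 1).eventually h, eventually_ge_atTop 1] with N hN hN1
  rwa [ncard_inter_Iic_eq_count, Nat.sub_add_cancel hN1, lt_div_iff₀ (by positivity),
    Nat.cast_sub hN1, Nat.cast_one, sub_add_cancel] at hN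

lemma infinite_of_lowerDensity_pos (hA : 0 < lowerDensity A) : A.Infinite := by
  classical
  intro hfin
  have hcount := eventually_mul_lt_count_of_lt_lowerDensity (half_lt_self hA)
  have hlarge := (tendsto_natCast_atTop_atTop.const_mul_atTop (half_pos hA)).eventually_ge_atTop
    (hfin.toFinset.card : ℝ)
  obtain ⟨N, hlt, hge⟩ := (hcount.and hlarge).exists
  have := Nat.count_le_card (p := (· ∈ A)) hfin N
  exact absurd (hlt.trans_le (by exact_mod_cast this)) hge.not_gt

lemma exists_nth_lt_of_lowerDensity_pos (hA : 0 < lowerDensity A) :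
    ∃ K : ℕ, 0 < K ∧ ∀ᶠ i in atTop, Nat.nth (· ∈ A) i < K * (i + 1) := by
  classical
  obtain ⟨δ, hδ, hδA⟩ := exists_between hA
  have hK0 : 0 < ⌈δ⁻¹⌉₊ := Nat.ceil_pos.mpr (inv_pos.mpr hδ)
  refine ⟨⌈δ⁻¹⌉₊, hK0, ?_⟩
  have hK : 1 ≤ δ * ⌈δ⁻¹⌉₊ := by
    rw [← mul_inv_cancel₀ hδ.ne']
    exact mul_le_mul_of_nonneg_left (Nat.le_ceil _) hδ.le
  have hmul : Tendsto (fun i : ℕ => ⌈δ⁻¹⌉₊ * (i + 1)) atTop atTop :=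
    (tendsto_add_atTop_nat 1).const_mul_atTop' hK0
  filter_upwards [hmul.eventually (eventually_mul_lt_count_of_lt_lowerDensity hδA)]
    with i hi
  refine Nat.nth_lt_of_lt_count ?_
  have : (i : ℝ) + 1 ≤ δ * ↑(⌈δ⁻¹⌉₊ * (i + 1)) := by
    push_cast
    nlinarith
  exact_mod_cast (show (i : ℝ) < Nat.count (· ∈ A) (⌈δ⁻¹⌉₊ * (i + 1)) by linarith)

theorem Antitone.summable_of_summable_comp_mul {a : ℕ → ℝ} (ha : Antitone a) {K : ℕ}
    (hK : 0 < K) (hs : Summable fun i => a (K * i)) : Summable a := by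
  have : NeZero K := ⟨hK.ne'⟩
  refine (summable_indicator_mod_iff (m := K) ha 0).mp <|
    (Function.Injective.summable_iff (mul_right_injective₀ hK.ne') fun n hn => ?_).mp ?_
  · refine Set.indicator_of_notMem (fun hn0 => hn ?_) _
    obtain ⟨i, rfl⟩ := (ZMod.natCast_eq_zero_iff n K).mp hn0
    exact ⟨i, rfl⟩
  · convert hs using 2 with i
    simp

theorem Antitone.summable_of_summable_indicator {a : ℕ → ℝ} (ha : Antitone a) (ha0 : 0 ≤ a)
    (hA : 0 < lowerDensity A) (hs : Summable (A.indicator a)) : Summable a := by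
  have hinf := infinite_of_lowerDensity_pos hA
  obtain ⟨K, hK, hnth⟩ := exists_nth_lt_of_lowerDensity_pos hA
  have hnth_sum : Summable fun i => a (Nat.nth (· ∈ A) i) := by
    refine (hs.comp_injective (Nat.nth_injective hinf)).congr fun i => ?_
    exact Set.indicator_of_mem (Nat.nth_mem_of_infinite hinf i) a
  have hblock : Summable fun i => a (K * (i + 1)) :=
    hnth_sum.of_norm_bounded_eventually_nat <| by
      filter_upwards [hnth] with i hi
      rw [Real.norm_of_nonneg (ha0 _)]
      exact ha hi.le
  exact ha.summable_of_summable_comp_mul hK ((summable_nat_add_iff 1).mp hblock)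

end LowerDensity

section WeightedShift

variable {𝕜 : Type*} [NormedField 𝕜] {p : ℝ≥0∞} {w : ℕ → 𝕜}
  {T : lp (fun _ : ℕ => 𝕜) p → lp (fun _ : ℕ => 𝕜) p}

theorem iterate_apply_of_weightedShift (hT : ∀ x i, T x i = w (i + 2) * x (i + 1)) (n : ℕ)
    (z : lp (fun _ : ℕ => 𝕜) p) (i : ℕ) :
    (T^[n] z) i = (∏ k ∈ Finset.Ico (i + 2) (i + n + 2), w k) * z (i + n) := by
  induction n generalizing z with
  | zero => simp
  | succ n ih =>
    rw [Function.iterate_succ_apply, ih, hT, ← mul_assoc,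
      ← Finset.prod_Ico_succ_top (by omega : i + 2 ≤ i + n + 2)]
    rfl

theorem norm_iterate_apply_zero_le_of_weightedShift (hT : ∀ x i, T x i = w (i + 2) * x (i + 1))
    (hw1 : ∀ n, 2 ≤ n → 1 ≤ ‖w n‖) (n : ℕ) (z : lp (fun _ : ℕ => 𝕜) p) :
    ‖(T^[n] z) 0‖ ≤ (∏ k ∈ Finset.Icc 2 (n + 2), ‖w k‖) * ‖z n‖ := by
  rw [iterate_apply_of_weightedShift hT, norm_mul, norm_prod, zero_add, zero_add]
  refine mul_le_mul_of_nonneg_right ?_ (norm_nonneg _)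
  exact Finset.prod_le_prod_of_subset_of_one_le Finset.Ico_subset_Icc_self
    (fun k _ => norm_nonneg _) fun k hk _ => hw1 k (Finset.mem_Icc.mp hk).1

theorem monotone_prod_norm_weight (hw1 : ∀ n, 2 ≤ n → 1 ≤ ‖w n‖) :
    Monotone fun n => ∏ k ∈ Finset.Icc 2 (n + 2), ‖w k‖ := fun _ _ hnm =>
  Finset.prod_le_prod_of_subset_of_one_le (Finset.Icc_subset_Icc_right (by omega))
    (fun k _ => norm_nonneg _) fun k hk _ => hw1 k (Finset.mem_Icc.mp hk).1

theorem one_le_prod_norm_weight (hw1 : ∀ n, 2 ≤ n → 1 ≤ ‖w n‖) (n : ℕ) :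
    1 ≤ ∏ k ∈ Finset.Icc 2 (n + 2), ‖w k‖ :=
  Finset.one_le_prod fun k hk => hw1 k (Finset.mem_Icc.mp hk).1

end WeightedShift

theorem one_div_rpow_le_of_half_lt_mul_pow {P t q : ℝ} {m : ℕ} (hP : 0 < P) (ht : 0 ≤ t)
    (hq : 0 ≤ q) (hm : m ≠ 0) (h : 1 / 2 < P * t ^ m) :
    1 / P ^ (q / m) ≤ 2 ^ (q / m) * t ^ q := by
  have hpow : (t ^ m) ^ (q / m) = t ^ q := by
    rw [← Real.rpow_natCast, ← Real.rpow_mul ht, mul_div_cancel₀ _ (Nat.cast_ne_zero.mpr hm)]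
  rw [div_le_iff₀ (Real.rpow_pos_of_pos hP _), ← hpow, mul_right_comm,
    ← Real.mul_rpow (by norm_num) hP.le, ← Real.mul_rpow (by positivity) (by positivity)]
  exact Real.one_le_rpow (by linarith) (by positivity)

theorem not_freqHypercyclic_pow_of_weightedShift {𝕜 : Type*} [NormedField 𝕜] {p : ℝ≥0∞}
    [Fact (1 ≤ p)] (hp : p ≠ ⊤) {w : ℕ → 𝕜} (hw1 : ∀ n, 2 ≤ n → 1 ≤ ‖w n‖)
    {T : lp (fun _ : ℕ => 𝕜) p → lp (fun _ : ℕ => 𝕜) p}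
    (hT : ∀ x i, T x i = w (i + 2) * x (i + 1)) {m : ℕ} (hm : m ≠ 0)
    (hdiv : ¬ Summable fun n : ℕ =>
      (1 : ℝ) / (∏ k ∈ Finset.Icc 2 (n + 2), ‖w k‖) ^ (p.toReal / m))
    (x xm : lp (fun _ : ℕ => 𝕜) p) (hxm : ∀ i, xm i = x i ^ m) :
    ¬ FreqHypercyclic T xm := by
  intro hFH
  have hp0 : 0 < p.toReal := ENNReal.toReal_pos (zero_lt_one.trans_le Fact.out).ne' hp
  set P := fun n : ℕ => ∏ k ∈ Finset.Icc 2 (n + 2), ‖w k‖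
  have hP : ∀ n, 0 < P n := fun n => zero_lt_one.trans_le (one_le_prod_norm_weight hw1 n)
  set U : Set (lp (fun _ : ℕ => 𝕜) p) := {z | 1 / 2 < ‖z 0‖}
  have hU : IsOpen U := isOpen_lt continuous_const (lp.lipschitzWith_one_eval p 0).continuous.norm
  have hUne : U.Nonempty := ⟨lp.single p 0 1, by simp [U]; norm_num⟩
  have hvisit : ∀ n ∈ {n | T^[n] xm ∈ U},
      1 / P n ^ (p.toReal / m) ≤ 2 ^ (p.toReal / m) * ‖x n‖ ^ p.toReal := fun n hn =>
    one_div_rpow_le_of_half_lt_mul_pow (hP n) (norm_nonneg _) hp0.le hm <| by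
      simpa [← norm_pow, ← hxm] using
        (show 1 / 2 < ‖(T^[n] xm) 0‖ from hn).trans_le
          (norm_iterate_apply_zero_le_of_weightedShift hT hw1 n xm)
  refine hdiv <| Antitone.summable_of_summable_indicator ?_ (fun n => by positivity)
    (hFH U hU hUne) ?_
  · exact fun k n hkn => one_div_le_one_div_of_le (Real.rpow_pos_of_pos (hP k) _)
      (Real.rpow_le_rpow (hP k).le (monotone_prod_norm_weight hw1 hkn) (by positivity))
  · refine (((lp.memℓp x).summable hp0).mul_left (2 ^ (p.toReal / m))).of_nonneg_of_le
      (fun n => Set.indicator_nonneg (fun n _ => by positivity) n) fun n => ?_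
    by_cases hn : n ∈ {n | T^[n] xm ∈ U}
    · rw [Set.indicator_of_mem hn]
      exact hvisit n hn
    · rw [Set.indicator_of_notMem hn]
      positivity

theorem lp.memℓp_mul {ι 𝕜 : Type*} [NormedRing 𝕜] {p : ℝ≥0∞} (hp : p ≠ 0)
    (u z : lp (fun _ : ι => 𝕜) p) : Memℓp (fun i => u i * z i) p :=
  ((lp.memℓp z).norm.const_mul ‖u‖).mono fun i =>
    (norm_mul_le _ _).trans <|
      mul_le_mul_of_nonneg_right (lp.norm_apply_le_norm hp u i) (norm_nonneg _)

theorem exists_pow_mem_of_mul_mem {ι 𝕜 : Type*} [NormedRing 𝕜] {p : ℝ≥0∞} (hp : p ≠ 0)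
    {S : Set (lp (fun _ : ι => 𝕜) p)}
    (hS : ∀ a ∈ S, ∀ b ∈ S, ∀ ab : lp (fun _ : ι => 𝕜) p, (∀ i, ab i = a i * b i) → ab ∈ S)
    {z : lp (fun _ : ι => 𝕜) p} (hz : z ∈ S) (k : ℕ) :
    ∃ u ∈ S, ∀ i, u i = z i ^ (k + 1) := by
  induction k with
  | zero => exact ⟨z, hz, fun i => (pow_one _).symm⟩
  | succ k ih =>
    obtain ⟨u, hu, hpow⟩ := ih
    refine ⟨⟨_, lp.memℓp_mul hp u z⟩, hS u hu z hz _ fun i => rfl, fun i => ?_⟩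
    simp only [hpow, pow_succ]

theorem stmt10_general (p : ℝ≥0∞) [Fact (1 ≤ p)] (hp : p ≠ ⊤)
    (w : ℕ → ℂ) (hw1 : ∀ n : ℕ, 2 ≤ n → 1 ≤ ‖w n‖)
    (T : lp (fun _ : ℕ => ℂ) p → lp (fun _ : ℕ => ℂ) p)
    (hT : ∀ (x : lp (fun _ : ℕ => ℂ) p) (i : ℕ), T x i = w (i + 2) * x (i + 1))
    (m : ℕ) (hm : 2 ≤ m)
    (hdiv : ¬ Summable fun n : ℕ =>
      (1 : ℝ) / (∏ k ∈ Finset.Icc 2 (n + 2), ‖w k‖) ^ (p.toReal / m)) :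
    (∀ x : lp (fun _ : ℕ => ℂ) p, ∀ xm : lp (fun _ : ℕ => ℂ) p,
      (∀ i : ℕ, xm i = x i ^ m) → ¬ FreqHypercyclic T xm) ∧
    (∀ S : Set (lp (fun _ : ℕ => ℂ) p),
      (0 : lp (fun _ : ℕ => ℂ) p) ∈ S →
      (∀ a ∈ S, ∀ b ∈ S, a + b ∈ S) →
      (∀ (c : ℂ), ∀ a ∈ S, c • a ∈ S) →
      (∀ a ∈ S, ∀ b ∈ S, ∀ ab : lp (fun _ : ℕ => ℂ) p,
        (∀ i : ℕ, ab i = a i * b i) → ab ∈ S) →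
      S \ {0} ⊆ {x | FreqHypercyclic T x} → S = {0}) := by
  have hpow := not_freqHypercyclic_pow_of_weightedShift hp hw1 hT (by omega : m ≠ 0) hdiv
  refine ⟨hpow, fun S h0 _ _ hmul hFH => ?_⟩
  refine Set.eq_singleton_iff_unique_mem.mpr ⟨h0, fun z hz => by_contra fun hz0 => ?_⟩
  obtain ⟨u, hu, hzu⟩ :=
    exists_pow_mem_of_mul_mem (zero_lt_one.trans_le Fact.out).ne' hmul hz (m - 1)
  rw [Nat.sub_add_cancel (by omega)] at hzu
  have hu0 : u ≠ 0 := fun hu0 => hz0 <| lp.ext <| funext fun i =>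
    eq_zero_of_pow_eq_zero (by rw [← hzu, hu0]; rfl)
  exact hpow z u hzu (hFH ⟨hu, hu0⟩)

/-- Let `B_w` be a weighted backward shift on `ℓ^p` (`1 ≤ p < ∞`),
with bounded weights `w(n)`, `n ≥ 2`, of modulus `≥ 1`. (Coordinates are indexed from
`0`, so the coordinate `i` corresponds to the classical index `i+1` and
`(B_w x)(i) = w(i+2) x(i+1)`.) If for some integer `m ≥ 2` the series
`Σ_{n≥2} 1/|w(2)⋯w(n)|^{p/m}` diverges, then for every `x ∈ ℓ^p` the coordinatewise
power `x^m` is not frequently hypercyclic for `B_w`; in particular `B_w` has no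
frequently hypercyclic algebra for the coordinatewise product. -/
theorem stmt10 (p : ℝ≥0∞) [Fact (1 ≤ p)] (hp : p ≠ ⊤)
    (w : ℕ → ℂ) (hw1 : ∀ n : ℕ, 2 ≤ n → 1 ≤ ‖w n‖) (hwb : ∃ C : ℝ, ∀ n, ‖w n‖ ≤ C)
    (hw0 : ∀ n : ℕ, 2 ≤ n → w n ≠ 0)
    (T : lp (fun _ : ℕ => ℂ) p → lp (fun _ : ℕ => ℂ) p)
    (hT : ∀ (x : lp (fun _ : ℕ => ℂ) p) (i : ℕ), T x i = w (i + 2) * x (i + 1))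
    (m : ℕ) (hm : 2 ≤ m)
    (hdiv : ¬ Summable fun n : ℕ =>
      (1 : ℝ) / (∏ k ∈ Finset.Icc 2 (n + 2), ‖w k‖) ^ (p.toReal / m)) :
    (∀ x : lp (fun _ : ℕ => ℂ) p, ∀ xm : lp (fun _ : ℕ => ℂ) p,
      (∀ i : ℕ, xm i = x i ^ m) → ¬ FreqHypercyclic T xm) ∧
    (∀ S : Set (lp (fun _ : ℕ => ℂ) p),
      (0 : lp (fun _ : ℕ => ℂ) p) ∈ S →
      (∀ a ∈ S, ∀ b ∈ S, a + b ∈ S) →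
      (∀ (c : ℂ), ∀ a ∈ S, c • a ∈ S) →
      (∀ a ∈ S, ∀ b ∈ S, ∀ ab : lp (fun _ : ℕ => ℂ) p,
        (∀ i : ℕ, ab i = a i * b i) → ab ∈ S) →
      S \ {0} ⊆ {x | FreqHypercyclic T x} → S = {0}) :=
  stmt10_general p hp w hw1 T hT m hm hdiv
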